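/- Consider the rewrite system on words over the alphabet {a, b, ā, b̄} with rules ab→ba, bā→āb, āb̄→b̄ā, b̄a→ab̄, aā→ε, āa→ε, bb̄→ε, b̄b→ε. If u → v (one rewrite step) and v admits a matching satisfying the crossing condition, then u admits a matching satisfying the crossing condition. -/
import Mathlib


/-- The four-letter alphabet `{a, b, ā, b̄}`; `A` stands for `ā` and `B` for `b̄`. -/
inductive L : Type
  | a | b | A | B
deriving DecidableEq

/-- The antiparallel letter: `a ↔ ā`, `b ↔ b̄`. -/
def bar : L → L
  | .a => .A
  | .A => .a
  | .b => .B
  | .B => .b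

/-- Letterwise application of the involution `a ↔ ā`, `b ↔ b̄` to a word. -/
def barw (w : List L) : List L := w.map bar

/-- The eight rewrite rules of the Sub Rosa system:
`ab→ba`, `bā→āb`, `āb̄→b̄ā`, `b̄a→ab̄`, `aā→ε`, `āa→ε`, `bb̄→ε`, `b̄b→ε`. -/
def Rule : List L → List L → Prop := fun x y =>
  (x = [.a, .b] ∧ y = [.b, .a]) ∨ (x = [.b, .A] ∧ y = [.A, .b]) ∨
  (x = [.A, .B] ∧ y = [.B, .A]) ∨ (x = [.B, .a] ∧ y = [.a, .B]) ∨
  (x = [.a, .A] ∧ y = []) ∨ (x = [.A, .a] ∧ y = []) ∨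
  (x = [.b, .B] ∧ y = []) ∨ (x = [.B, .b] ∧ y = [])

/-- One rewrite step: replace a factor matching the left side of a rule by its right side. -/
def Step (u v : List L) : Prop :=
  ∃ p s x y, Rule x y ∧ u = p ++ x ++ s ∧ v = p ++ y ++ s

/-- `u →* v`: the reflexive transitive closure of the rewrite step. -/
def Steps : List L → List L → Prop := Relation.ReflTransGen Step

/-- `rep w n` is the `n`-fold concatenation `w^n`. -/
def rep (w : List L) (n : ℕ) : List L := (List.replicate n w).flatten

/-- A matching on a word pairs each occurrence of a letter with an occurrence of its
antiparallel letter, bijectively (an involution without fixed points). -/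
structure Matching (w : List L) where
  m : Fin w.length → Fin w.length
  invol : ∀ i, m (m i) = i
  nofix : ∀ i, m i ≠ i
  compat : ∀ i, w.get (m i) = bar (w.get i)

/-- The 4-tuples of letters that are cyclic rotations of `(a, b, ā, b̄)`. -/
def Rot4 : L → L → L → L → Prop := fun x y z t =>
  (x = .a ∧ y = .b ∧ z = .A ∧ t = .B) ∨ (x = .b ∧ y = .A ∧ z = .B ∧ t = .a) ∨
  (x = .A ∧ y = .B ∧ z = .a ∧ t = .b) ∨ (x = .B ∧ y = .a ∧ z = .b ∧ t = .A)

/-- The crossing condition: whenever two matched pairs interleave (cross) in the cyclic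
word, the four letters read in positional order form a cyclic rotation of `a, b, ā, b̄`. -/
def CrossOK {w : List L} (M : Matching w) : Prop :=
  ∀ i j i' j' : Fin w.length, i < j → j < i' → i' < j' →
    M.m i = i' → M.m j = j' →
    Rot4 (w.get i) (w.get j) (w.get i') (w.get j')

/-- A word admits a matching satisfying the crossing condition. -/
def GoodWord (w : List L) : Prop := ∃ M : Matching w, CrossOK M

set_option linter.unnecessarySeqFocus false

lemma bar_bar (c : L) : bar (bar c) = c := by cases c <;> rfl

/-- nat version of the matching function -/
def natm {v : List L} (M : Matching v) : ℕ → ℕ :=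
  fun x => if h : x < v.length then (M.m ⟨x, h⟩).val else 0

lemma natm_lt {v : List L} (M : Matching v) {x : ℕ} (h : x < v.length) :
    natm M x < v.length := by simp only [natm, dif_pos h]; exact (M.m ⟨x, h⟩).isLt

lemma natm_inv {v : List L} (M : Matching v) {x : ℕ} (h : x < v.length) :
    natm M (natm M x) = x := by
  simp only [natm, dif_pos h, dif_pos (M.m ⟨x, h⟩).isLt]
  exact congrArg Fin.val (M.invol ⟨x, h⟩)

lemma natm_ne {v : List L} (M : Matching v) {x : ℕ} (h : x < v.length) :
    natm M x ≠ x := by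
  simp only [natm, dif_pos h]
  intro hc
  exact M.nofix ⟨x, h⟩ (Fin.ext hc)

lemma natm_comp {v : List L} (M : Matching v) {x : ℕ} (h : x < v.length) :
    v[natm M x]'(natm_lt M h) = bar (v[x]) := by
  have := M.compat ⟨x, h⟩
  simp only [List.get_eq_getElem] at this
  simp only [natm, dif_pos h]
  exact this

lemma natm_cross {v : List L} (M : Matching v) (hM : CrossOK M) {i j i' j' : ℕ}
    (hj' : j' < v.length) (h1 : i < j) (h2 : j < i') (h3 : i' < j')
    (e1 : natm M i = i') (e2 : natm M j = j') :
    Rot4 (v[i]'(by omega)) (v[j]'(by omega)) (v[i']'(by omega)) (v[j']'hj') := by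
  have hi : i < v.length := by omega
  have hj : j < v.length := by omega
  have hi' : i' < v.length := by omega
  have := hM ⟨i, hi⟩ ⟨j, hj⟩ ⟨i', hi'⟩ ⟨j', hj'⟩ h1 h2 h3
    (Fin.ext (by simpa [natm, dif_pos hi] using e1))
    (Fin.ext (by simpa [natm, dif_pos hj] using e2))
  simpa [List.get_eq_getElem] using this

/-- build a matching from a nat function -/
def Matching.ofNat (w : List L) (F : ℕ → ℕ)
    (hlt : ∀ i < w.length, F i < w.length)
    (hinv : ∀ i < w.length, F (F i) = i)
    (hne : ∀ i < w.length, F i ≠ i)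
    (hcomp : ∀ i (h : i < w.length), w[F i]'(hlt i h) = bar (w[i])) : Matching w where
  m i := ⟨F i.val, hlt i.val i.isLt⟩
  invol i := Fin.ext (hinv i.val i.isLt)
  nofix i h := hne i.val i.isLt (congrArg Fin.val h)
  compat i := by simpa [List.get_eq_getElem] using hcomp i.val i.isLt

lemma crossOK_ofNat (w : List L) (F : ℕ → ℕ) (hlt : ∀ i < w.length, F i < w.length)
    (hinv : ∀ i < w.length, F (F i) = i) (hne : ∀ i < w.length, F i ≠ i)
    (hcomp : ∀ i (h : i < w.length), w[F i]'(hlt i h) = bar (w[i]))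
    (hcr : ∀ i j i' j' : ℕ, ∀ h : j' < w.length, ∀ _h1 : i < j, ∀ _h2 : j < i', ∀ _h3 : i' < j',
      F i = i' → F j = j' →
      Rot4 (w[i]'(by omega)) (w[j]'(by omega)) (w[i']'(by omega)) (w[j']'h)) :
    CrossOK (Matching.ofNat w F hlt hinv hne hcomp) := by
  intro i j i' j' h1 h2 h3 e1 e2
  have := hcr i.val j.val i'.val j'.val j'.isLt h1 h2 h3
    (congrArg Fin.val e1) (congrArg Fin.val e2)
  simpa [List.get_eq_getElem] using this
def sw (k i : ℕ) : ℕ := if i = k then k+1 else if i = k+1 then k else i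

lemma sw_sw (k i : ℕ) : sw k (sw k i) = i := by unfold sw; split_ifs <;> omega

lemma sw_lt {k n i : ℕ} (h2 : k+1 < n) (h : i < n) : sw k i < n := by
  unfold sw; split_ifs <;> omega

lemma sw_mono {k i j : ℕ} (h : i < j) (hne : ¬(i = k ∧ j = k+1)) : sw k i < sw k j := by
  unfold sw; split_ifs <;> omega

lemma sw_eq_iff {k x y : ℕ} : sw k x = y ↔ x = sw k y := by
  constructor <;> (rintro rfl; rw [sw_sw])

-- deletion helpers
def fins (k j : ℕ) : ℕ := if j < k then j else j + 2
def gdel (k i : ℕ) : ℕ := if i < k then i else i - 2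

lemma gdel_fins (k j : ℕ) : gdel k (fins k j) = j := by unfold fins gdel; split_ifs <;> omega
lemma fins_gdel {k i : ℕ} (h1 : i ≠ k) (h2 : i ≠ k+1) : fins k (gdel k i) = i := by
  unfold fins gdel; split_ifs <;> omega
lemma fins_ne_k {k j : ℕ} : fins k j ≠ k ∧ fins k j ≠ k + 1 := by
  unfold fins; split_ifs <;> omega
lemma fins_lt {k m j : ℕ} (h : j < k + m) : fins k j < k + 2 + m := by
  unfold fins; split_ifs <;> omega
lemma gdel_lt {k m i : ℕ} (h : i < k + 2 + m) (h1 : i ≠ k) (h2 : i ≠ k+1) : gdel k i < k + m := by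
  unfold gdel; split_ifs <;> omega
lemma gdel_mono {k i j : ℕ} (h : i < j) (hik : i ≠ k) (hik1 : i ≠ k+1) (hjk : j ≠ k)
    (hjk1 : j ≠ k+1) : gdel k i < gdel k j := by
  unfold gdel; split_ifs <;> omega

-- list get lemmas

lemma getP {α : Type*} (p m s : List α) (i : ℕ) (hi : i < p.length) (h : i < (p++m++s).length) :
    (p++m++s)[i] = p[i] := by
  rw [List.getElem_append_left (by simp; omega), List.getElem_append_left hi]

lemma get0 {α : Type*} (p s : List α) (c d : α) (h : p.length < (p++[c,d]++s).length) :
    (p++[c,d]++s)[p.length] = c := by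
  rw [List.getElem_append_left (by simp), List.getElem_append_right (le_refl _)]
  simp

lemma get1 {α : Type*} (p s : List α) (c d : α) (h : p.length+1 < (p++[c,d]++s).length) :
    (p++[c,d]++s)[p.length+1] = d := by
  rw [List.getElem_append_left (by simp), List.getElem_append_right (by omega)]
  simp

lemma getS {α : Type*} (p s : List α) (c d : α) (i : ℕ) (hle : p.length + 2 ≤ i)
    (h : i < (p++[c,d]++s).length) :
    (p++[c,d]++s)[i] = s[i-p.length-2]'(by simp at h ⊢; omega) := by
  rw [List.getElem_append_right (by simp; omega)]
  congr 1
  simp; omega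

lemma len2 {α : Type*} (p s : List α) (c d : α) : (p++[c,d]++s).length = p.length + 2 + s.length := by
  simp; omega

lemma good_of_swap (p s : List L) (c d : L)
    (hcd : (c = L.a ∧ d = L.b) ∨ (c = L.b ∧ d = L.A) ∨ (c = L.A ∧ d = L.B) ∨
      (c = L.B ∧ d = L.a))
    (hv : GoodWord (p ++ [d, c] ++ s)) : GoodWord (p ++ [c, d] ++ s) := by
  obtain ⟨M, hM⟩ := hv
  have hvl : (p ++ [d, c] ++ s).length = p.length + 2 + s.length := len2 p s d c
  have hul : (p ++ [c, d] ++ s).length = p.length + 2 + s.length := len2 p s c d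
  have hswv : ∀ x, x < (p ++ [c, d] ++ s).length → sw p.length x < (p ++ [d, c] ++ s).length := by
    intro x hx; rw [hvl]; exact sw_lt (by omega) (by omega)
  have hget : ∀ x (h : x < (p ++ [c, d] ++ s).length),
      (p ++ [c, d] ++ s)[x] = (p ++ [d, c] ++ s)[sw p.length x]'(hswv x h) := by
    intro x h
    have h' : x < p.length + 2 + s.length := by rw [hul] at h; exact h
    by_cases h1 : x < p.length
    · simp only [show sw p.length x = x from by unfold sw; split_ifs <;> omega]
      rw [getP p _ s x h1, getP p _ s x h1]
    by_cases h2 : x = p.length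
    · subst h2
      simp only [show sw p.length p.length = p.length + 1 from by unfold sw; split_ifs <;> omega]
      rw [get0 p s c d, get1 p s d c]
    by_cases h3 : x = p.length + 1
    · subst h3
      simp only [show sw p.length (p.length + 1) = p.length from by unfold sw; split_ifs <;> omega]
      rw [get1 p s c d, get0 p s d c]
    · simp only [show sw p.length x = x from by unfold sw; split_ifs <;> omega]
      rw [getS p s c d x (by omega), getS p s d c x (by omega)]
  have hlt : ∀ x, x < (p ++ [c, d] ++ s).length →
      sw p.length (natm M (sw p.length x)) < (p ++ [c, d] ++ s).length := by
    intro x hx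
    have h2 := natm_lt M (hswv x hx)
    rw [hul]; exact sw_lt (by omega) (by omega)
  have hinv : ∀ x, x < (p ++ [c, d] ++ s).length →
      sw p.length (natm M (sw p.length (sw p.length (natm M (sw p.length x))))) = x := by
    intro x hx
    rw [sw_sw, natm_inv M (hswv x hx), sw_sw]
  have hne : ∀ x, x < (p ++ [c, d] ++ s).length →
      sw p.length (natm M (sw p.length x)) ≠ x := by
    intro x hx hc
    exact natm_ne M (hswv x hx) (sw_eq_iff.mp hc)
  have hcomp : ∀ x (h : x < (p ++ [c, d] ++ s).length),
      (p ++ [c, d] ++ s)[sw p.length (natm M (sw p.length x))]'(hlt x h)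
        = bar ((p ++ [c, d] ++ s)[x]) := by
    intro x hx
    rw [hget _ (hlt x hx), hget x hx]
    simp only [sw_sw]
    exact natm_comp M (hswv x hx)
  refine ⟨Matching.ofNat _ _ hlt hinv hne hcomp,
    crossOK_ofNat _ _ hlt hinv hne hcomp ?_⟩
  intro i j i' j' hj' h1 h2 h3 e1 e2
  have hi : i < (p ++ [c, d] ++ s).length := by omega
  have hj : j < (p ++ [c, d] ++ s).length := by omega
  have hi' : i' < (p ++ [c, d] ++ s).length := by omega
  have e1' : natm M (sw p.length i) = sw p.length i' := sw_eq_iff.mp e1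
  have e2' : natm M (sw p.length j) = sw p.length j' := sw_eq_iff.mp e2
  rw [hget i hi, hget j hj, hget i' hi', hget j' hj']
  rw [hul] at hj'
  by_cases hc1 : i = p.length ∧ j = p.length + 1
  · obtain ⟨rfl, rfl⟩ := hc1
    simp only [show sw p.length p.length = p.length + 1 from by unfold sw; split_ifs <;> omega,
      show sw p.length (p.length + 1) = p.length from by unfold sw; split_ifs <;> omega,
      show sw p.length i' = i' from by unfold sw; split_ifs <;> omega,
      show sw p.length j' = j' from by unfold sw; split_ifs <;> omega] at e1' e2' ⊢
    have l3 : (p ++ [d, c] ++ s)[i']'(by omega) = bar c := by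
      have h5 := natm_comp M (show p.length + 1 < (p ++ [d, c] ++ s).length by omega)
      simp only [e1'] at h5
      rw [h5, get1 p s d c]
    have l4 : (p ++ [d, c] ++ s)[j']'(by omega) = bar d := by
      have h5 := natm_comp M (show p.length < (p ++ [d, c] ++ s).length by omega)
      simp only [e2'] at h5
      rw [h5, get0 p s d c]
    rw [l3, l4, get1 p s d c, get0 p s d c]
    rcases hcd with ⟨rfl, rfl⟩ | ⟨rfl, rfl⟩ | ⟨rfl, rfl⟩ | ⟨rfl, rfl⟩ <;> simp [Rot4, bar]
  by_cases hc2 : j = p.length ∧ i' = p.length + 1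
  · obtain ⟨rfl, rfl⟩ := hc2
    simp only [show sw p.length i = i from by unfold sw; split_ifs <;> omega,
      show sw p.length p.length = p.length + 1 from by unfold sw; split_ifs <;> omega,
      show sw p.length (p.length + 1) = p.length from by unfold sw; split_ifs <;> omega,
      show sw p.length j' = j' from by unfold sw; split_ifs <;> omega] at e1' e2' ⊢
    have l1 : (p ++ [d, c] ++ s)[i]'(by omega) = bar d := by
      have h5 := natm_comp M (show i < (p ++ [d, c] ++ s).length by omega)
      simp only [e1'] at h5
      rw [get0 p s d c] at h5
      rw [← bar_bar ((p ++ [d, c] ++ s)[i]'(by omega)), ← h5]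
    have l4 : (p ++ [d, c] ++ s)[j']'(by omega) = bar c := by
      have h5 := natm_comp M (show p.length + 1 < (p ++ [d, c] ++ s).length by omega)
      simp only [e2'] at h5
      rw [h5, get1 p s d c]
    rw [l1, l4, get1 p s d c, get0 p s d c]
    rcases hcd with ⟨rfl, rfl⟩ | ⟨rfl, rfl⟩ | ⟨rfl, rfl⟩ | ⟨rfl, rfl⟩ <;> simp [Rot4, bar]
  by_cases hc3 : i' = p.length ∧ j' = p.length + 1
  · obtain ⟨rfl, rfl⟩ := hc3
    simp only [show sw p.length i = i from by unfold sw; split_ifs <;> omega,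
      show sw p.length j = j from by unfold sw; split_ifs <;> omega,
      show sw p.length p.length = p.length + 1 from by unfold sw; split_ifs <;> omega,
      show sw p.length (p.length + 1) = p.length from by unfold sw; split_ifs <;> omega] at e1' e2' ⊢
    have l1 : (p ++ [d, c] ++ s)[i]'(by omega) = bar c := by
      have h5 := natm_comp M (show i < (p ++ [d, c] ++ s).length by omega)
      simp only [e1'] at h5
      rw [get1 p s d c] at h5
      rw [← bar_bar ((p ++ [d, c] ++ s)[i]'(by omega)), ← h5]
    have l2 : (p ++ [d, c] ++ s)[j]'(by omega) = bar d := by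
      have h5 := natm_comp M (show j < (p ++ [d, c] ++ s).length by omega)
      simp only [e2'] at h5
      rw [get0 p s d c] at h5
      rw [← bar_bar ((p ++ [d, c] ++ s)[j]'(by omega)), ← h5]
    rw [l1, l2, get1 p s d c, get0 p s d c]
    rcases hcd with ⟨rfl, rfl⟩ | ⟨rfl, rfl⟩ | ⟨rfl, rfl⟩ | ⟨rfl, rfl⟩ <;> simp [Rot4, bar]
  · exact natm_cross M hM (by rw [hvl]; exact sw_lt (by omega) (by omega))
      (sw_mono h1 hc1) (sw_mono h2 hc2) (sw_mono h3 hc3) e1' e2'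

def delF (k : ℕ) (m : ℕ → ℕ) (x : ℕ) : ℕ :=
  if x = k then k + 1 else if x = k + 1 then k else fins k (m (gdel k x))

lemma delF_k (k : ℕ) (m : ℕ → ℕ) : delF k m k = k + 1 := by simp [delF]
lemma delF_k1 (k : ℕ) (m : ℕ → ℕ) : delF k m (k+1) = k := by simp [delF]
lemma delF_other (k : ℕ) (m : ℕ → ℕ) {x : ℕ} (h1 : x ≠ k) (h2 : x ≠ k + 1) :
    delF k m x = fins k (m (gdel k x)) := by simp [delF, h1, h2]

lemma good_of_del (p s : List L) (c : L)
    (hv : GoodWord (p ++ s)) : GoodWord (p ++ [c, bar c] ++ s) := by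
  obtain ⟨M, hM⟩ := hv
  have hvl : (p ++ s).length = p.length + s.length := by simp
  have hul : (p ++ [c, bar c] ++ s).length = p.length + 2 + s.length := len2 p s c (bar c)
  -- letters of u away from the inserted pair
  have hu_get : ∀ x (h : x < (p ++ [c, bar c] ++ s).length) (hx1 : x ≠ p.length)
      (hx2 : x ≠ p.length + 1),
      (p ++ [c, bar c] ++ s)[x] =
        (p ++ s)[gdel p.length x]'(by rw [hvl]; rw [hul] at h; exact gdel_lt h hx1 hx2) := by
    intro x h h1 h2
    have h' : x < p.length + 2 + s.length := by rw [hul] at h; exact h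
    by_cases h3 : x < p.length
    · simp only [show gdel p.length x = x from by unfold gdel; split_ifs <;> omega]
      rw [getP p _ s x h3, List.getElem_append_left h3]
    · have h4 : p.length + 2 ≤ x := by omega
      simp only [show gdel p.length x = x - 2 from by unfold gdel; split_ifs <;> omega]
      rw [getS p s c (bar c) x h4, List.getElem_append_right (by omega)]
      congr 1
      omega
  have hgd : ∀ x, x < (p ++ [c, bar c] ++ s).length → x ≠ p.length → x ≠ p.length + 1 →
      gdel p.length x < (p ++ s).length := by
    intro x h h1 h2; rw [hvl]; rw [hul] at h; exact gdel_lt h h1 h2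
  have hlt : ∀ x, x < (p ++ [c, bar c] ++ s).length →
      delF p.length (natm M) x < (p ++ [c, bar c] ++ s).length := by
    intro x hx
    rw [hul] at hx ⊢
    by_cases h1 : x = p.length
    · rw [h1, delF_k]; omega
    by_cases h2 : x = p.length + 1
    · rw [h2, delF_k1]; omega
    · rw [delF_other _ _ h1 h2]
      have := natm_lt M (show gdel p.length x < (p ++ s).length from by
        rw [hvl]; exact gdel_lt hx h1 h2)
      rw [hvl] at this
      exact fins_lt this
  have hinv : ∀ x, x < (p ++ [c, bar c] ++ s).length →
      delF p.length (natm M) (delF p.length (natm M) x) = x := by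
    intro x hx
    by_cases h1 : x = p.length
    · rw [h1, delF_k, delF_k1]
    by_cases h2 : x = p.length + 1
    · rw [h2, delF_k1, delF_k]
    · rw [delF_other _ _ h1 h2,
        delF_other _ _ fins_ne_k.1 fins_ne_k.2, gdel_fins,
        natm_inv M (hgd x hx h1 h2), fins_gdel h1 h2]
  have hne : ∀ x, x < (p ++ [c, bar c] ++ s).length →
      delF p.length (natm M) x ≠ x := by
    intro x hx hc
    by_cases h1 : x = p.length
    · rw [h1, delF_k] at hc; omega
    by_cases h2 : x = p.length + 1
    · rw [h2, delF_k1] at hc; omega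
    · rw [delF_other _ _ h1 h2] at hc
      have : natm M (gdel p.length x) = gdel p.length x := by
        conv_rhs => rw [← hc, gdel_fins]
      exact natm_ne M (hgd x hx h1 h2) this
  have hcomp : ∀ x (h : x < (p ++ [c, bar c] ++ s).length),
      (p ++ [c, bar c] ++ s)[delF p.length (natm M) x]'(hlt x h)
        = bar ((p ++ [c, bar c] ++ s)[x]) := by
    intro x hx
    by_cases h1 : x = p.length
    · subst h1
      simp only [delF_k]
      rw [get1 p s c (bar c), get0 p s c (bar c)]
    by_cases h2 : x = p.length + 1
    · subst h2
      simp only [delF_k1]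
      rw [get1 p s c (bar c), get0 p s c (bar c), bar_bar]
    · simp only [delF_other _ _ h1 h2]
      have hfb : fins p.length (natm M (gdel p.length x)) < (p ++ [c, bar c] ++ s).length := by
        rw [← delF_other p.length (natm M) h1 h2]
        exact hlt x hx
      rw [hu_get _ hfb fins_ne_k.1 fins_ne_k.2, hu_get x hx h1 h2]
      simp only [gdel_fins]
      exact natm_comp M (hgd x hx h1 h2)
  refine ⟨Matching.ofNat _ _ hlt hinv hne hcomp,
    crossOK_ofNat _ _ hlt hinv hne hcomp ?_⟩
  intro i j i' j' hj' h1 h2 h3 e1 e2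
  have hi : i < (p ++ [c, bar c] ++ s).length := by omega
  have hj : j < (p ++ [c, bar c] ++ s).length := by omega
  have hi' : i' < (p ++ [c, bar c] ++ s).length := by omega
  by_cases hik : i = p.length
  · rw [hik, delF_k] at e1; omega
  by_cases hik1 : i = p.length + 1
  · rw [hik1, delF_k1] at e1; omega
  by_cases hjk : j = p.length
  · rw [hjk, delF_k] at e2; omega
  by_cases hjk1 : j = p.length + 1
  · rw [hjk1, delF_k1] at e2; omega
  rw [delF_other _ _ hik hik1] at e1
  rw [delF_other _ _ hjk hjk1] at e2
  have hi'k : i' ≠ p.length := e1 ▸ fins_ne_k.1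
  have hi'k1 : i' ≠ p.length + 1 := e1 ▸ fins_ne_k.2
  have hj'k : j' ≠ p.length := e2 ▸ fins_ne_k.1
  have hj'k1 : j' ≠ p.length + 1 := e2 ▸ fins_ne_k.2
  have e1' : natm M (gdel p.length i) = gdel p.length i' := by
    conv_rhs => rw [← e1, gdel_fins]
  have e2' : natm M (gdel p.length j) = gdel p.length j' := by
    conv_rhs => rw [← e2, gdel_fins]
  rw [hu_get i hi hik hik1, hu_get j hj hjk hjk1, hu_get i' hi' hi'k hi'k1,
    hu_get j' hj' hj'k hj'k1]
  exact natm_cross M hM (hgd j' hj' hj'k hj'k1)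
    (gdel_mono h1 hik hik1 hjk hjk1) (gdel_mono h2 hjk hjk1 hi'k hi'k1)
    (gdel_mono h3 hi'k hi'k1 hj'k hj'k1) e1' e2'


/-- If `u → v` in one rewrite step and `v` admits a matching satisfying the crossing
condition, then so does `u`. -/
theorem subrosa_step_preserves_crossing (u v : List L) (h : Step u v) (hv : GoodWord v) :
    GoodWord u := by
  obtain ⟨p, s, x, y, hr, hu, hvv⟩ := h
  subst hu; subst hvv
  rcases hr with ⟨rfl, rfl⟩ | ⟨rfl, rfl⟩ | ⟨rfl, rfl⟩ | ⟨rfl, rfl⟩ |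
    ⟨rfl, rfl⟩ | ⟨rfl, rfl⟩ | ⟨rfl, rfl⟩ | ⟨rfl, rfl⟩
  · exact good_of_swap p s L.a L.b (Or.inl ⟨rfl, rfl⟩) hv
  · exact good_of_swap p s L.b L.A (Or.inr (Or.inl ⟨rfl, rfl⟩)) hv
  · exact good_of_swap p s L.A L.B (Or.inr (Or.inr (Or.inl ⟨rfl, rfl⟩))) hv
  · exact good_of_swap p s L.B L.a (Or.inr (Or.inr (Or.inr ⟨rfl, rfl⟩))) hv
  · exact good_of_del p s L.a (by simpa using hv)
  · exact good_of_del p s L.A (by simpa using hv)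
  · exact good_of_del p s L.b (by simpa using hv)
  · exact good_of_del p s L.B (by simpa using hv)
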